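/- Let Ω ⊆ ℝ^N be open, let φ = (φ^{(1)},…,φ^{(k)}) : Ω → ℝ^N be a C^1 vector field, and let ψ : Ω → ℝ be continuous with ψ(x) > 0 for all x ∈ Ω. Then for every C^1 function u : ℝ^N → ℝ whose support is compact and contained in Ω, and such that the functions ψ^2|∇_λ u|^2, u^2|φ|^2/ψ^2 and u^2·div_λ φ are Lebesgue integrable on Ω, one has ∫_Ω | (φ(x)/ψ(x)) u(x) − ψ(x) ∇_λ u(x) |^2 dx = ∫_Ω ψ(x)^2 |∇_λ u(x)|^2 dx + ∫_Ω u(x)^2 ( |φ(x)|^2/ψ(x)^2 + div_λ φ(x) ) dx. -/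

import Mathlib

open MeasureTheory Finset

noncomputable section

/-- `ℝ^N = ℝ^{N_1} × ⋯ × ℝ^{N_k}` with the Euclidean norm. -/
abbrev Eb {k : ℕ} (N : Fin k → ℕ) : Type :=
  PiLp 2 (fun i : Fin k => EuclideanSpace ℝ (Fin (N i)))

instance {k : ℕ} (N : Fin k → ℕ) : MeasurableSpace (Eb N) :=
  MeasurableSpace.comap (WithLp.equiv 2 _) MeasurableSpace.pi
instance {k : ℕ} (N : Fin k → ℕ) : BorelSpace (Eb N) := PiLp.borelSpace 2

/-- `λ_i(x) = ∏_j |x^{(j)}|^{α_{ij}}`. -/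
def lamF {k : ℕ} (N : Fin k → ℕ) (α : Fin k → Fin k → ℝ) (i : Fin k) (x : Eb N) : ℝ :=
  ∏ j : Fin k, ‖x j‖ ^ (α i j)

/-- the dilations `δ_r(x) = (r^{σ_1} x^{(1)}, …, r^{σ_k} x^{(k)})`. -/
def dilF {k : ℕ} (N : Fin k → ℕ) (σ : Fin k → ℝ) (r : ℝ) (x : Eb N) : Eb N :=
  (WithLp.equiv 2 _).symm (fun i => (r ^ σ i) • x i)

/-- the homogeneous norm `[[x]]_λ`. -/
def hnormF {k : ℕ} (N : Fin k → ℕ) (α : Fin k → Fin k → ℝ) (σ : Fin k → ℝ) (x : Eb N) : ℝ :=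
  (∑ j : Fin k, (∏ i ∈ Finset.univ.erase j, (lamF N α i x) ^ 2) * (σ j) ^ 2 * ‖x j‖ ^ 2)
    ^ (1 / (2 * (1 + ∑ i : Fin k, (σ i - 1))))

/-- the homogeneous distance from the origin `‖x‖_λ`. -/
def dnormF {k : ℕ} (N : Fin k → ℕ) (σ : Fin k → ℝ) (x : Eb N) : ℝ :=
  (∑ j : Fin k, ‖x j‖ ^ (2 * ∏ i ∈ Finset.univ.erase j, σ i))
    ^ (1 / (2 * ∏ i : Fin k, σ i))

/-- `∇_λ u = (λ_1 ∇_{x^{(1)}} u, …, λ_k ∇_{x^{(k)}} u)`. -/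
def lgradF {k : ℕ} (N : Fin k → ℕ) (α : Fin k → Fin k → ℝ) (u : Eb N → ℝ) (x : Eb N) : Eb N :=
  (WithLp.equiv 2 _).symm (fun i => lamF N α i x • (gradient u x) i)

/-- the standard basis vector of `ℝ^N` in block `i`, coordinate `j`. -/
def basisVecF {k : ℕ} (N : Fin k → ℕ) (i : Fin k) (j : Fin (N i)) : Eb N :=
  (WithLp.equiv 2 _).symm (Pi.single i (EuclideanSpace.single j 1))

/-- `div_λ h = ∑_i λ_i div_{x^{(i)}} h^{(i)}`. -/
def divlamF {k : ℕ} (N : Fin k → ℕ) (α : Fin k → Fin k → ℝ) (h : Eb N → Eb N) (x : Eb N) : ℝ :=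
  ∑ i : Fin k, lamF N α i x * ∑ j : Fin (N i), fderiv ℝ h x (basisVecF N i j) i j

/-- `Δ_λ u = ∑_i λ_i^2 Δ_{x^{(i)}} u`. -/
def lapLamF {k : ℕ} (N : Fin k → ℕ) (α : Fin k → Fin k → ℝ) (u : Eb N → ℝ) (x : Eb N) : ℝ :=
  ∑ i : Fin k, (lamF N α i x) ^ 2 * ∑ j : Fin (N i),
    fderiv ℝ (fun y => fderiv ℝ u y (basisVecF N i j)) x (basisVecF N i j)

/-- the homogeneous dimension `Q = σ_1 N_1 + ⋯ + σ_k N_k`. -/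
def QF {k : ℕ} (N : Fin k → ℕ) (σ : Fin k → ℝ) : ℝ :=
  ∑ i : Fin k, σ i * N i

/-!
On `Ω`, expanding the square gives
`|(u/ψ)φ - ψ∇_λ u|² = ψ²|∇_λ u|² + u²|φ|²/ψ² - 2u⟨φ, ∇_λ u⟩`, and the product rule gives
`2u⟨φ, ∇_λ u⟩ + u² div_λ φ = div_λ (u²φ)`. Since `u` vanishes near the complement of `Ω`, the
field `u²φ` is `C¹` on all of `ℝ^N` with compact support, and `∫ div_λ (u²φ) = 0`: each term
`λ_i ∂_{x^{(i)}_j} (u²φ^{(i)}_j)` integrates to zero by parts along `x^{(i)}_j`,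
because `α_{ij} = 0` for `j ≥ i` makes `λ_i` independent of `x^{(i)}`, and `α ≥ 0` makes it
continuous.
-/

section Calculus

variable {E F : Type*} [NormedAddCommGroup E] [NormedSpace ℝ E]
  [NormedAddCommGroup F] [NormedSpace ℝ F]

theorem ContDiff.smul_contDiffOn_of_tsupport_subset {n : WithTop ℕ∞} {w : E → ℝ} {f : E → F}
    {Ω : Set E} (hw : ContDiff ℝ n w) (hf : ContDiffOn ℝ n f Ω) (hΩ : IsOpen Ω)
    (hsupp : tsupport w ⊆ Ω) : ContDiff ℝ n fun x => w x • f x := by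
  refine contDiff_iff_contDiffAt.2 fun x => ?_
  by_cases hx : x ∈ Ω
  · exact hw.contDiffAt.smul (hf.contDiffAt (hΩ.mem_nhds hx))
  · have hw0 : w =ᶠ[nhds x] 0 := notMem_tsupport_iff_eventuallyEq.1 fun h => hx (hsupp h)
    refine contDiffAt_const (c := (0 : F)).congr_of_eventuallyEq ?_
    filter_upwards [hw0] with y hy
    simp [hy]

theorem integrable_mul_fderiv_apply [MeasurableSpace E] [OpensMeasurableSpace E] {μ : Measure E}
    [IsFiniteMeasureOnCompacts μ] {f g : E → ℝ} (hf : Continuous f) (hg : ContDiff ℝ 1 g)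
    (hgc : HasCompactSupport g) (v : E) :
    Integrable (fun x => f x * fderiv ℝ g x v) μ :=
  (hf.mul ((hg.continuous_fderiv one_ne_zero).clm_apply continuous_const)
    ).integrable_of_hasCompactSupport (hgc.fderiv_apply (𝕜 := ℝ) v).mul_left

theorem integral_mul_fderiv_eq_zero_of_hasLineDerivAt_zero [FiniteDimensional ℝ E]
    [MeasurableSpace E] [BorelSpace E] {μ : Measure E} [μ.IsAddHaarMeasure] {f g : E → ℝ} {v : E}
    (hf : Continuous f) (hf' : ∀ x, HasLineDerivAt ℝ f 0 x v) (hg : ContDiff ℝ 1 g)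
    (hgc : HasCompactSupport g) :
    ∫ x, f x * fderiv ℝ g x v ∂μ = 0 := by
  have h := integral_bilinear_hasLineDerivAt_right_eq_neg_left_of_integrable
    (B := ContinuousLinearMap.mul ℝ ℝ) (f' := fun _ => (0 : ℝ)) (μ := μ) (by simp)
    (integrable_mul_fderiv_apply hf hg hgc v)
    ((hf.mul hg.continuous).integrable_of_hasCompactSupport hgc.mul_left)
    (fun x _ => hf' x)
    (fun x _ => ((hg.differentiable one_ne_zero x).hasFDerivAt).hasLineDerivAt v)
  simpa using h

end Calculus

theorem norm_div_smul_sub_smul_sq {E : Type*} [NormedAddCommGroup E] [InnerProductSpace ℝ E]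
    {a b : ℝ} (ha : a ≠ 0) (x y : E) :
    ‖(b / a) • x - a • y‖ ^ 2 =
      a ^ 2 * ‖y‖ ^ 2 + b ^ 2 * (‖x‖ ^ 2 / a ^ 2) - 2 * b * inner ℝ x y := by
  rw [norm_sub_sq_real, norm_smul, norm_smul, real_inner_smul_left, real_inner_smul_right,
    mul_pow, mul_pow, Real.norm_eq_abs, Real.norm_eq_abs, sq_abs, sq_abs, div_pow]
  field_simp
  ring

section Lambda

variable {k : ℕ} {N : Fin k → ℕ} {α : Fin k → Fin k → ℝ}

theorem continuous_lamF (hα : ∀ i j, 0 ≤ α i j) (i : Fin k) : Continuous (lamF N α i) :=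
  continuous_finsetProd _ fun j _ =>
    (continuous_norm.comp (PiLp.continuous_apply 2 _ j)).rpow_const fun _ => Or.inr (hα i j)

theorem basisVecF_apply_of_ne {i l : Fin k} (j : Fin (N i)) (hl : l ≠ i) :
    basisVecF N i j l = 0 := by
  simp [basisVecF, Pi.single_eq_of_ne hl]

theorem hasLineDerivAt_lamF_basisVecF (hα0 : ∀ i j : Fin k, i ≤ j → α i j = 0) (i : Fin k)
    (j : Fin (N i)) (x : Eb N) : HasLineDerivAt ℝ (lamF N α i) 0 x (basisVecF N i j) := by
  have hconst : (fun t : ℝ => lamF N α i (x + t • basisVecF N i j)) = fun _ => lamF N α i x := by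
    funext t
    refine Finset.prod_congr rfl fun l _ => ?_
    rcases eq_or_ne l i with rfl | hl
    · rw [hα0 l l le_rfl, Real.rpow_zero, Real.rpow_zero]
    · simp [basisVecF_apply_of_ne j hl]
  unfold HasLineDerivAt
  rw [hconst]
  exact hasDerivAt_const 0 (lamF N α i x)

theorem gradient_apply_apply (u : Eb N → ℝ) (x : Eb N) (i : Fin k) (j : Fin (N i)) :
    gradient u x i j = fderiv ℝ u x (basisVecF N i j) := by
  rw [← InnerProductSpace.toDual_symm_apply, ← gradient, PiLp.inner_apply,
    Finset.sum_eq_single i (fun l _ hl => by simp [basisVecF_apply_of_ne j hl]) (by simp)]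
  simp [basisVecF, EuclideanSpace.inner_single_right]

theorem inner_lgradF (u : Eb N → ℝ) (w x : Eb N) :
    inner ℝ w (lgradF N α u x) =
      ∑ i, lamF N α i x * ∑ j, w i j * fderiv ℝ u x (basisVecF N i j) := by
  simp only [lgradF, PiLp.inner_apply, ← gradient_apply_apply]
  refine Finset.sum_congr rfl fun i _ => ?_
  simp only [Finset.mul_sum]
  refine Finset.sum_congr rfl fun j _ => ?_
  simp only [WithLp.equiv_symm_apply, PiLp.toLp_apply, PiLp.smul_apply, smul_eq_mul,
    RCLike.inner_apply, conj_trivial]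
  ring

theorem lgradF_sq {u : Eb N → ℝ} {x : Eb N} (hu : DifferentiableAt ℝ u x) :
    lgradF N α (fun y => u y ^ 2) x = (2 * u x) • lgradF N α u x := by
  have hgrad : HasGradientAt (fun y => u y ^ 2) ((2 * u x) • gradient u x) x := by
    rw [hasGradientAt_iff_hasFDerivAt, map_smul, gradient, LinearIsometryEquiv.apply_symm_apply]
    simpa [mul_comm] using hu.hasFDerivAt.pow 2
  ext i j
  simp [lgradF, hgrad.gradient, mul_left_comm]

theorem fderiv_apply_apply {h : Eb N → Eb N} {x : Eb N} (hh : DifferentiableAt ℝ h x) (v : Eb N)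
    (i : Fin k) (j : Fin (N i)) : fderiv ℝ (fun y => h y i j) x v = fderiv ℝ h x v i j := by
  let P : Eb N →L[ℝ] ℝ := (EuclideanSpace.proj j).comp (PiLp.proj 2 _ i)
  exact congrArg (· v) (P.hasFDerivAt.comp x hh.hasFDerivAt).fderiv

theorem divlamF_smul {w : Eb N → ℝ} {h : Eb N → Eb N} {x : Eb N} (hw : DifferentiableAt ℝ w x)
    (hh : DifferentiableAt ℝ h x) :
    divlamF N α (fun y => w y • h y) x =
      inner ℝ (h x) (lgradF N α w x) + w x * divlamF N α h x := by
  simp only [divlamF, inner_lgradF, fderiv_fun_smul hw hh, Finset.mul_sum,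
    ← Finset.sum_add_distrib]
  refine Finset.sum_congr rfl fun i _ => Finset.sum_congr rfl fun j _ => ?_
  simp only [add_apply, smul_apply, ContinuousLinearMap.smulRight_apply, PiLp.add_apply,
    PiLp.smul_apply, smul_eq_mul]
  ring

theorem divlamF_sq_smul {u : Eb N → ℝ} {h : Eb N → Eb N} {x : Eb N}
    (hu : DifferentiableAt ℝ u x) (hh : DifferentiableAt ℝ h x) :
    divlamF N α (fun y => u y ^ 2 • h y) x =
      2 * u x * inner ℝ (h x) (lgradF N α u x) + u x ^ 2 * divlamF N α h x := by
  rw [divlamF_smul (w := fun y => u y ^ 2) (hu.pow 2) hh, lgradF_sq hu, real_inner_smul_right]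

theorem divlamF_of_notMem_tsupport {h : Eb N → Eb N} {x : Eb N} (hx : x ∉ tsupport h) :
    divlamF N α h x = 0 := by
  simp [divlamF, fderiv_of_notMem_tsupport ℝ hx]

theorem divlamF_eq_sum_fderiv_apply {h : Eb N → Eb N} (hh : Differentiable ℝ h) :
    divlamF N α h = fun x =>
      ∑ i, ∑ j, lamF N α i x * fderiv ℝ (fun y => h y i j) x (basisVecF N i j) := by
  funext x
  simp only [divlamF, Finset.mul_sum, fderiv_apply_apply (hh x)]

theorem ContDiff.apply_apply {n : WithTop ℕ∞} {h : Eb N → Eb N} (hh : ContDiff ℝ n h) (i : Fin k)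
    (j : Fin (N i)) : ContDiff ℝ n fun y => h y i j :=
  contDiff_euclidean.1 ((contDiff_piLp 2).1 hh i) j

theorem HasCompactSupport.apply_apply {h : Eb N → Eb N} (hhc : HasCompactSupport h) (i : Fin k)
    (j : Fin (N i)) : HasCompactSupport fun y => h y i j :=
  hhc.comp_left (g := fun v : Eb N => v i j) rfl

theorem integrable_lamF_mul_fderiv_apply_apply (hα : ∀ i j, 0 ≤ α i j) {h : Eb N → Eb N}
    (hh : ContDiff ℝ 1 h) (hhc : HasCompactSupport h) (i : Fin k) (j : Fin (N i)) :
    Integrable fun x => lamF N α i x * fderiv ℝ (fun y => h y i j) x (basisVecF N i j) :=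
  integrable_mul_fderiv_apply (continuous_lamF hα i) (hh.apply_apply i j)
    (hhc.apply_apply i j) _

theorem integrable_divlamF (hα : ∀ i j, 0 ≤ α i j) {h : Eb N → Eb N} (hh : ContDiff ℝ 1 h)
    (hhc : HasCompactSupport h) : Integrable (divlamF N α h) := by
  rw [divlamF_eq_sum_fderiv_apply (hh.differentiable one_ne_zero)]
  exact integrable_finsetSum _ fun i _ => integrable_finsetSum _ fun j _ =>
    integrable_lamF_mul_fderiv_apply_apply hα hh hhc i j

theorem integral_divlamF_eq_zero (hα : ∀ i j, 0 ≤ α i j) (hα0 : ∀ i j : Fin k, i ≤ j → α i j = 0)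
    {h : Eb N → Eb N} (hh : ContDiff ℝ 1 h) (hhc : HasCompactSupport h) :
    ∫ x, divlamF N α h x = 0 := by
  rw [divlamF_eq_sum_fderiv_apply (hh.differentiable one_ne_zero),
    integral_finsetSum _ fun i _ => integrable_finsetSum _ fun j _ =>
      integrable_lamF_mul_fderiv_apply_apply hα hh hhc i j]
  refine Finset.sum_eq_zero fun i _ => ?_
  rw [integral_finsetSum _ fun j _ => integrable_lamF_mul_fderiv_apply_apply hα hh hhc i j]
  exact Finset.sum_eq_zero fun j _ => integral_mul_fderiv_eq_zero_of_hasLineDerivAt_zero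
    (continuous_lamF hα i) (hasLineDerivAt_lamF_basisVecF hα0 i j) (hh.apply_apply i j)
    (hhc.apply_apply i j)

end Lambda

theorem deltaLambda_integral_identity_general {k : ℕ}
    (N : Fin k → ℕ)
    (α : Fin k → Fin k → ℝ)
    (hα : ∀ i j, 0 ≤ α i j) (hα0 : ∀ i j : Fin k, i ≤ j → α i j = 0)
    (Ω : Set (Eb N)) (hΩ : IsOpen Ω)
    (φ : Eb N → Eb N) (hφ : ContDiffOn ℝ 1 φ Ω)
    (ψ : Eb N → ℝ) (hψ : ∀ x ∈ Ω, 0 < ψ x)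
    (u : Eb N → ℝ) (hu : ContDiff ℝ 1 u)
    (hcs : HasCompactSupport u) (hsupp : tsupport u ⊆ Ω)
    (hint1 : IntegrableOn (fun x => ψ x ^ 2 * ‖lgradF N α u x‖ ^ 2) Ω)
    (hint2 : IntegrableOn (fun x => u x ^ 2 * (‖φ x‖ ^ 2 / ψ x ^ 2)) Ω)
    (hint3 : IntegrableOn (fun x => u x ^ 2 * divlamF N α φ x) Ω) :
    ∫ x in Ω, ‖(u x / ψ x) • φ x - ψ x • lgradF N α u x‖ ^ 2 =
      (∫ x in Ω, ψ x ^ 2 * ‖lgradF N α u x‖ ^ 2) +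
        ∫ x in Ω, u x ^ 2 * (‖φ x‖ ^ 2 / ψ x ^ 2 + divlamF N α φ x) := by
  set Φ : Eb N → Eb N := fun x => u x ^ 2 • φ x
  have hsupp_sq : tsupport (fun x => u x ^ 2) ⊆ Ω :=
    (closure_mono fun x hx => by simp_all).trans hsupp
  have hΦ : ContDiff ℝ 1 Φ := (hu.pow 2).smul_contDiffOn_of_tsupport_subset hφ hΩ hsupp_sq
  have hΦc : HasCompactSupport Φ :=
    (hcs.comp_left (g := fun t : ℝ => t ^ 2) (zero_pow two_ne_zero)).smul_right
  have hΦ0 : ∫ x in Ω, divlamF N α Φ x = 0 := by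
    rw [setIntegral_eq_integral_of_forall_compl_eq_zero fun x hx =>
      divlamF_of_notMem_tsupport fun h => hx (hsupp_sq ((tsupport_smul_subset_left _ _) h))]
    exact integral_divlamF_eq_zero hα hα0 hΦ hΦc
  calc ∫ x in Ω, ‖(u x / ψ x) • φ x - ψ x • lgradF N α u x‖ ^ 2
      = ∫ x in Ω, (ψ x ^ 2 * ‖lgradF N α u x‖ ^ 2 +
          u x ^ 2 * (‖φ x‖ ^ 2 / ψ x ^ 2 + divlamF N α φ x) - divlamF N α Φ x) := by
        refine setIntegral_congr_fun hΩ.measurableSet fun x hx => ?_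
        rw [norm_div_smul_sub_smul_sq (hψ x hx).ne',
          divlamF_sq_smul (hu.differentiable one_ne_zero x)
            ((hφ.differentiableOn one_ne_zero x hx).differentiableAt (hΩ.mem_nhds hx))]
        ring
    _ = _ := by
        have hint := Integrable.fun_add hint2 hint3
        simp only [← mul_add] at hint
        rw [integral_sub (Integrable.fun_add hint1 hint)
          (integrable_divlamF hα hΦ hΦc).integrableOn, integral_add hint1 hint, hΦ0, sub_zero]

/-- the integration-by-parts identity
`∫_Ω |(φ/ψ)u - ψ∇_λ u|² = ∫_Ω ψ²|∇_λ u|² + ∫_Ω u²(|φ|²/ψ² + div_λ φ)`. -/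
theorem deltaLambda_integral_identity {k : ℕ} (hk : 0 < k)
    (N : Fin k → ℕ) (hN : ∀ i, 1 ≤ N i)
    (α : Fin k → Fin k → ℝ)
    (hα : ∀ i j, 0 ≤ α i j) (hα0 : ∀ i j : Fin k, i ≤ j → α i j = 0)
    (Ω : Set (Eb N)) (hΩ : IsOpen Ω)
    (φ : Eb N → Eb N) (hφ : ContDiffOn ℝ 1 φ Ω)
    (ψ : Eb N → ℝ) (hψc : ContinuousOn ψ Ω) (hψ : ∀ x ∈ Ω, 0 < ψ x)
    (u : Eb N → ℝ) (hu : ContDiff ℝ 1 u)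
    (hcs : HasCompactSupport u) (hsupp : tsupport u ⊆ Ω)
    (hint1 : IntegrableOn (fun x => ψ x ^ 2 * ‖lgradF N α u x‖ ^ 2) Ω)
    (hint2 : IntegrableOn (fun x => u x ^ 2 * (‖φ x‖ ^ 2 / ψ x ^ 2)) Ω)
    (hint3 : IntegrableOn (fun x => u x ^ 2 * divlamF N α φ x) Ω) :
    ∫ x in Ω, ‖(u x / ψ x) • φ x - ψ x • lgradF N α u x‖ ^ 2 =
      (∫ x in Ω, ψ x ^ 2 * ‖lgradF N α u x‖ ^ 2) +
        ∫ x in Ω, u x ^ 2 * (‖φ x‖ ^ 2 / ψ x ^ 2 + divlamF N α φ x) :=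
  deltaLambda_integral_identity_general N α hα hα0 Ω hΩ φ hφ ψ hψ u hu hcs hsupp hint1 hint2 hint3
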